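/- Let (A_α) be a direct system of differential A-algebras with structure maps ν_α : A → A_α, and suppose each contraction map ν_α* : Spec^Δ A_α → Spec^Δ A is a homeomorphism. Then the contraction map ν* : Spec^Δ(colim A_α) → Spec^Δ A induced by the limit homomorphism ν : A → colim A_α is a homeomorphism. -/

import Mathlib

/-!
A prime differential ideal `q` of the colimit is determined by its traces on the `A_α`, and
these form a compatible family of prime differential ideals. Since each contraction
`Spec^Δ A_α → Spec^Δ A` is bijective, such a family is determined by its common contraction `p`
to `A`: its members are the unique primes `Q_α(p)` of `A_α` lying over `p`. Conversely, for every
`p` the union of the images of the `Q_α(p)` is a prime differential ideal of the colimit, which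
gives the inverse map. It is continuous because the image of `y ∈ A_α` lies in this ideal iff
`y ∈ Q_α(p)`, a closed condition on `p` since `Q_α` is continuous.
-/

/-- An ideal is a differential ideal w.r.t. a family of derivation maps `d`. -/
def IsDiffIdeal {A : Type*} [CommRing A] {k : ℕ} (d : Fin k → A → A) (I : Ideal A) : Prop :=
  ∀ i : Fin k, ∀ x ∈ I, d i x ∈ I

/-- The differential spectrum: prime differential ideals, with the Kolchin topology
(the subspace topology induced from the Zariski topology on `PrimeSpectrum`). -/
abbrev DiffSpec {A : Type*} [CommRing A] {k : ℕ} (d : Fin k → A → A) :=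
  {p : PrimeSpectrum A // IsDiffIdeal d p.asIdeal}

/-- A Keigher ring: the radical of every differential ideal is differential. -/
def IsKeigher {A : Type*} [CommRing A] {k : ℕ} (d : Fin k → A → A) : Prop :=
  ∀ I : Ideal A, IsDiffIdeal d I → IsDiffIdeal d I.radical

/-- `radDiffGen d E` is the smallest radical differential ideal containing `E`. -/
def radDiffGen {A : Type*} [CommRing A] {k : ℕ} (d : Fin k → A → A) (E : Set A) : Ideal A :=
  sInf {I : Ideal A | E ⊆ I ∧ I.IsRadical ∧ IsDiffIdeal d I}


namespace Ring.DirectLimit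

variable {ι : Type*} [Preorder ι] [IsDirectedOrder ι] {G : ι → Type*} [∀ i, CommRing (G i)]
  {f : ∀ i j, i ≤ j → G i →+* G j}

theorem exists_eq_of_of_eq [DirectedSystem G fun i j h ↦ f i j h] {i j : ι} {x : G i} {y : G j}
    (h : of G (f · · ·) i x = of G (f · · ·) j y) :
    ∃ k, ∃ (hik : i ≤ k) (hjk : j ≤ k), f i k hik x = f j k hjk y := by
  obtain ⟨m, him, hjm⟩ := directed_of (· ≤ ·) i j
  have : of G (f · · ·) m (f i m him x - f j m hjm y) = 0 := by
    rw [map_sub, of_f, of_f, h, sub_self]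
  obtain ⟨k, hmk, hk⟩ := of.zero_exact this
  rw [map_sub, sub_eq_zero, DirectedSystem.map_map' f, DirectedSystem.map_map' f] at hk
  exact ⟨k, _, _, hk⟩

variable [Nonempty ι] (P : ∀ i, Ideal (G i)) (hP : ∀ i j h, (P j).comap (f i j h) = P i)

def idealOfCompatible : Ideal (DirectLimit G (f · · ·)) where
  carrier := {x | ∃ i, ∃ y ∈ P i, of G _ i y = x}
  zero_mem' := ⟨Classical.arbitrary ι, 0, zero_mem _, map_zero _⟩
  add_mem' := by
    rintro _ _ ⟨i, x, hx, rfl⟩ ⟨j, y, hy, rfl⟩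
    obtain ⟨k, hik, hjk⟩ := directed_of (· ≤ ·) i j
    refine ⟨k, f i k hik x + f j k hjk y, add_mem ?_ ?_, by rw [map_add, of_f, of_f]⟩
    · rwa [← Ideal.mem_comap, hP]
    · rwa [← Ideal.mem_comap, hP]
  smul_mem' := by
    rintro c _ ⟨i, x, hx, rfl⟩
    obtain ⟨j, z, rfl⟩ := exists_of c
    obtain ⟨k, hik, hjk⟩ := directed_of (· ≤ ·) i j
    refine ⟨k, f j k hjk z * f i k hik x, Ideal.mul_mem_left _ _ ?_, ?_⟩
    · rwa [← Ideal.mem_comap, hP]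
    · rw [map_mul, of_f, of_f, smul_eq_mul]

theorem isDiffIdeal_idealOfCompatible {n : ℕ} {d : ∀ i, Fin n → G i → G i}
    {d' : Fin n → DirectLimit G (f · · ·) → DirectLimit G (f · · ·)}
    (hd' : ∀ i m x, d' m (of G _ i x) = of G _ i (d i m x))
    (hPd : ∀ i, IsDiffIdeal (d i) (P i)) : IsDiffIdeal d' (idealOfCompatible P hP) := by
  rintro m _ ⟨i, x, hx, rfl⟩
  exact ⟨i, d i m x, hPd i m x hx, (hd' i m x).symm⟩

variable [DirectedSystem G fun i j h ↦ f i j h]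

variable {P} in
theorem of_mem_idealOfCompatible {i : ι} {x : G i} :
    of G _ i x ∈ idealOfCompatible P hP ↔ x ∈ P i := by
  refine ⟨fun ⟨j, y, hy, hyx⟩ ↦ ?_, fun hx ↦ ⟨i, x, hx, rfl⟩⟩
  obtain ⟨k, hjk, hik, hk⟩ := exists_eq_of_of_eq hyx
  rwa [← hP i k hik, Ideal.mem_comap, ← hk, ← Ideal.mem_comap, hP]

theorem idealOfCompatible_eq {I : Ideal (DirectLimit G (f · · ·))}
    (hI : ∀ i, I.comap (of G _ i) = P i) : idealOfCompatible P hP = I := by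
  ext x
  obtain ⟨i, x, rfl⟩ := exists_of x
  rw [of_mem_idealOfCompatible, ← hI, Ideal.mem_comap]

theorem isPrime_idealOfCompatible (hPp : ∀ i, (P i).IsPrime) :
    (idealOfCompatible P hP).IsPrime := by
  refine ⟨fun htop ↦ ?_, fun {x y} hxy ↦ ?_⟩
  · have i := Classical.arbitrary ι
    have : of G _ i 1 ∈ idealOfCompatible P hP := by rw [htop]; trivial
    exact (hPp i).ne_top ((Ideal.eq_top_iff_one _).2 ((of_mem_idealOfCompatible hP).1 this))
  · obtain ⟨i, x, rfl⟩ := exists_of x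
    obtain ⟨j, y, rfl⟩ := exists_of y
    obtain ⟨k, hik, hjk⟩ := directed_of (· ≤ ·) i j
    rw [← of_f hik, ← of_f hjk, ← map_mul, of_mem_idealOfCompatible] at hxy
    rw [← of_f hik, ← of_f hjk, of_mem_idealOfCompatible, of_mem_idealOfCompatible]
    exact (hPp k).mem_or_mem hxy

end Ring.DirectLimit

namespace DiffSpec

variable {A B : Type*} [CommRing A] [CommRing B] {k : ℕ} {d : Fin k → A → A} {e : Fin k → B → B}

theorem ext {p q : DiffSpec d} (h : p.1.asIdeal = q.1.asIdeal) : p = q :=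
  Subtype.ext (PrimeSpectrum.ext h)

def comap (φ : A →+* B) (hφ : ∀ i a, φ (d i a) = e i (φ a)) : C(DiffSpec e, DiffSpec d) where
  toFun q := ⟨PrimeSpectrum.comap φ q.1, fun i a ha ↦ by
    simpa only [PrimeSpectrum.comap_asIdeal, Ideal.mem_comap, hφ] using q.2 i _ ha⟩
  continuous_toFun :=
    ((PrimeSpectrum.continuous_comap φ).comp continuous_subtype_val).subtype_mk _

@[simp]
theorem comap_asIdeal (φ : A →+* B) (hφ : ∀ i a, φ (d i a) = e i (φ a)) (q : DiffSpec e) :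
    (comap φ hφ q).1.asIdeal = q.1.asIdeal.comap φ :=
  rfl

theorem isClosed_setOf_mem (a : A) : IsClosed {p : DiffSpec d | a ∈ p.1.asIdeal} := by
  convert (PrimeSpectrum.isClosed_zeroLocus {a}).preimage (continuous_subtype_val (p := _)) using 1
  ext p
  simp

theorem continuous_of_isClosed_setOf_mem {X : Type*} [TopologicalSpace X] {g : X → DiffSpec d}
    (hg : ∀ a, IsClosed {x | a ∈ (g x).1.asIdeal}) : Continuous g := by
  refine Continuous.subtype_mk (PrimeSpectrum.isTopologicalBasis_basic_opens.continuous_iff.2 ?_) _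
  rintro _ ⟨a, rfl⟩
  exact (hg a).isOpen_compl

end DiffSpec

section DirectLimit

open Ring.DirectLimit

variable {A : Type*} [CommRing A] {k : ℕ} {d : Fin k → A → A}
  {ι : Type*} [Preorder ι] [Nonempty ι]
  {G : ι → Type*} [∀ α, CommRing (G α)] {f : ∀ α β, α ≤ β → G α →+* G β}
  {dG : ∀ α, Fin k → G α → G α} {ν : ∀ α, A →+* G α}
  {d' : Fin k → Ring.DirectLimit G (f · · ·) → Ring.DirectLimit G (f · · ·)}
  {νlim : A →+* Ring.DirectLimit G (f · · ·)}

theorem Ring.DirectLimit.map_diff_of_eq_of (hνdiff : ∀ α i a, ν α (d i a) = dG α i (ν α a))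
    (hd' : ∀ α i x, d' i (of G _ α x) = of G _ α (dG α i x))
    (hνlim : ∀ α a, νlim a = of G _ α (ν α a)) (i : Fin k) (a : A) :
    νlim (d i a) = d' i (νlim a) := by
  have α := Classical.arbitrary ι
  rw [hνlim α, hνlim α, hνdiff, hd']

theorem DiffSpec.isHomeomorph_comap_directLimit [IsDirectedOrder ι]
    [DirectedSystem G fun α β h ↦ f α β h]
    (hνcompat : ∀ α β h a, f α β h (ν α a) = ν β a)
    (hνdiff : ∀ α i a, ν α (d i a) = dG α i (ν α a))
    (hfdiff : ∀ α β h i x, f α β h (dG α i x) = dG β i (f α β h x))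
    (hd' : ∀ α i x, d' i (of G _ α x) = of G _ α (dG α i x))
    (hνlim : ∀ α a, νlim a = of G _ α (ν α a))
    (hα : ∀ α, IsHomeomorph (DiffSpec.comap (ν α) (hνdiff α))) :
    IsHomeomorph (DiffSpec.comap νlim (map_diff_of_eq_of hνdiff hd' hνlim)) := by
  let e α := (hα α).homeomorph
  have lies_over p α : DiffSpec.comap (ν α) (hνdiff α) ((e α).symm p) = p :=
    (e α).apply_symm_apply p
  have eq_of_lies_over {p α q} (h : DiffSpec.comap (ν α) (hνdiff α) q = p) : (e α).symm p = q :=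
    (e α).symm_apply_eq.2 h.symm
  have compat p α β h : ((e β).symm p).1.asIdeal.comap (f α β h) = ((e α).symm p).1.asIdeal := by
    rw [eq_of_lies_over (q := DiffSpec.comap (f α β h) (hfdiff α β h) ((e β).symm p))
      (DiffSpec.ext ?_)]
    · rfl
    rw [DiffSpec.comap_asIdeal, DiffSpec.comap_asIdeal, Ideal.comap_comap,
      show (f α β h).comp (ν α) = ν β from RingHom.ext (hνcompat α β h)]
    exact congrArg (·.1.asIdeal) (lies_over p β)
  let lift p : DiffSpec d' :=
    ⟨⟨idealOfCompatible (fun α ↦ ((e α).symm p).1.asIdeal) (compat p),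
      isPrime_idealOfCompatible _ (compat p) fun α ↦ ((e α).symm p).1.2⟩,
      isDiffIdeal_idealOfCompatible _ (compat p) hd' fun α ↦ ((e α).symm p).2⟩
  refine isHomeomorph_iff_exists_inverse.2 ⟨(DiffSpec.comap _ _).continuous, lift, fun q ↦ ?_,
    fun p ↦ ?_, DiffSpec.continuous_of_isClosed_setOf_mem fun x ↦ ?_⟩
  · refine DiffSpec.ext (idealOfCompatible_eq _ (compat _) fun α ↦ ?_)
    rw [eq_of_lies_over (q := DiffSpec.comap (of G _ α) (fun i x ↦ (hd' α i x).symm) q)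
      (DiffSpec.ext ?_)]
    · rfl
    rw [DiffSpec.comap_asIdeal, DiffSpec.comap_asIdeal, DiffSpec.comap_asIdeal, Ideal.comap_comap,
      show (of G _ α).comp (ν α) = νlim from RingHom.ext fun a ↦ (hνlim α a).symm]
  · have α := Classical.arbitrary ι
    refine DiffSpec.ext (Ideal.ext fun a ↦ ?_)
    rw [DiffSpec.comap_asIdeal, Ideal.mem_comap, hνlim α, of_mem_idealOfCompatible]
    exact SetLike.ext_iff.1 (congrArg (·.1.asIdeal) (lies_over p α)) a
  · obtain ⟨α, y, rfl⟩ := exists_of x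
    simp only [lift, of_mem_idealOfCompatible]
    exact (DiffSpec.isClosed_setOf_mem y).preimage (e α).symm.continuous

end DirectLimit

theorem stmt8_general {A : Type*} [CommRing A] {k : ℕ}
    {ι : Type*} [Preorder ι] [IsDirected ι (· ≤ ·)] [Nonempty ι]
    (G : ι → Type*) [∀ α, CommRing (G α)]
    (f : ∀ α β, α ≤ β → G α → G β) [DirectedSystem G fun α β h => f α β h]
    (hfhom : ∀ α β h, ∃ r : G α →+* G β, ⇑r = f α β h)
    (δ : Fin k → Derivation ℤ A A)
    (δG : ∀ α, Fin k → Derivation ℤ (G α) (G α))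
    (ν : ∀ α, A →+* G α)
    (hνcompat : ∀ α β h a, f α β h (ν α a) = ν β a)
    (hνdiff : ∀ α i a, ν α (δ i a) = δG α i (ν α a))
    (hfdiff : ∀ α β h i x, f α β h (δG α i x) = δG β i (f α β h x))
    (δ' : Fin k → Derivation ℤ (Ring.DirectLimit G f) (Ring.DirectLimit G f))
    (hδ' : ∀ α i x, δ' i (Ring.DirectLimit.of G f α x) = Ring.DirectLimit.of G f α (δG α i x))
    (hα : ∀ α, ∃ h : DiffSpec (fun i => ⇑(δG α i)) ≃ₜ DiffSpec (fun i => ⇑(δ i)),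
      ∀ q, (h q).1.asIdeal = Ideal.comap (ν α) q.1.asIdeal)
    (νlim : A →+* Ring.DirectLimit G f)
    (hνlim : ∀ α a, νlim a = Ring.DirectLimit.of G f α (ν α a)) :
    ∃ h : DiffSpec (fun i => ⇑(δ' i)) ≃ₜ DiffSpec (fun i => ⇑(δ i)),
      ∀ q, (h q).1.asIdeal = Ideal.comap νlim q.1.asIdeal := by
  choose rf hrf using hfhom
  obtain rfl : f = fun α β h ↦ ⇑(rf α β h) := by
    funext α β h
    exact (hrf α β h).symm
  have hν α : IsHomeomorph (DiffSpec.comap (ν α) (hνdiff α)) := by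
    obtain ⟨h, hh⟩ := hα α
    exact isHomeomorph_iff_exists_homeomorph.2 ⟨h, funext fun q ↦ DiffSpec.ext (hh q)⟩
  exact ⟨(DiffSpec.isHomeomorph_comap_directLimit hνcompat hνdiff hfdiff hδ' hνlim hν).homeomorph,
    fun q ↦ rfl⟩

/-- For a direct system of differential `A`-algebras whose contraction maps on differential
spectra are all homeomorphisms, the contraction map of the direct limit is a homeomorphism. -/
theorem stmt8 {A : Type*} [CommRing A] {k : ℕ}
    {ι : Type*} [Preorder ι] [IsDirected ι (· ≤ ·)] [Nonempty ι]
    (G : ι → Type*) [∀ α, CommRing (G α)]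
    (f : ∀ α β, α ≤ β → G α → G β) [DirectedSystem G fun α β h => f α β h]
    (hfhom : ∀ α β h, ∃ r : G α →+* G β, ⇑r = f α β h)
    (δ : Fin k → Derivation ℤ A A)
    (hcomm : ∀ i j a, δ i (δ j a) = δ j (δ i a))
    (δG : ∀ α, Fin k → Derivation ℤ (G α) (G α))
    (ν : ∀ α, A →+* G α)
    (hνcompat : ∀ α β h a, f α β h (ν α a) = ν β a)
    (hνdiff : ∀ α i a, ν α (δ i a) = δG α i (ν α a))
    (hfdiff : ∀ α β h i x, f α β h (δG α i x) = δG β i (f α β h x))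
    (δ' : Fin k → Derivation ℤ (Ring.DirectLimit G f) (Ring.DirectLimit G f))
    (hδ' : ∀ α i x, δ' i (Ring.DirectLimit.of G f α x) = Ring.DirectLimit.of G f α (δG α i x))
    (hα : ∀ α, ∃ h : DiffSpec (fun i => ⇑(δG α i)) ≃ₜ DiffSpec (fun i => ⇑(δ i)),
      ∀ q, (h q).1.asIdeal = Ideal.comap (ν α) q.1.asIdeal)
    (νlim : A →+* Ring.DirectLimit G f)
    (hνlim : ∀ α a, νlim a = Ring.DirectLimit.of G f α (ν α a)) :
    ∃ h : DiffSpec (fun i => ⇑(δ' i)) ≃ₜ DiffSpec (fun i => ⇑(δ i)),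
      ∀ q, (h q).1.asIdeal = Ideal.comap νlim q.1.asIdeal :=
  stmt8_general G f hfhom δ δG ν hνcompat hνdiff hfdiff δ' hδ' hα νlim hνlim
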